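/- Let a1, a2 ≥ 2 be integers. The images of the monomials X̄1^{b1} X̄2^{b2} with 0 ≤ b1 < a2 and 0 ≤ b2 < a1 form a ℂ-basis of the Milnor ring Q_{W^T} = ℂ[X̄1, X̄2]/Jac(W^T) of the dual loop potential W^T = X̄1 X̄2^{a1} + X̄2 X̄1^{a2}; in particular dim_ℂ Q_{W^T} = a1*a2. -/

import Mathlib

/-! With `∂₀W = X₁^a1 + a2 X₀^(a2-1) X₁` and `∂₁W = a1 X₀ X₁^(a1-1) + X₀^a2` one has
`(a1 a2 - 1) X₀^a2 X₁ = a1 X₀ ∂₀W - X₁ ∂₁W` and `(a1 a2 - 1) X₀ X₁^a1 = a2 X₁ ∂₁W - X₀ ∂₀W`, so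
every monomial `X₀^i X₁^j` with `i, j ≥ 1` outside the box `i < a2, j < a1` lies in the Jacobian
ideal, while `∂₀W` and `∂₁W` rewrite the pure powers outside the box in terms of box monomials.
Hence the box monomials span the Milnor ring. For independence, these reductions define a
`ℂ`-linear coordinate map on all polynomials that kills every monomial multiple of `∂₀W` and `∂₁W`,
hence the whole ideal, and sends the box monomials to the standard basis. -/

noncomputable section

open MvPolynomial

/-- The Berglund–Hübsch dual `W^T = X̄1 X̄2^a1 + X̄2 X̄1^a2` of the loop
potential `W = X1^a1 X2 + X2^a2 X1`. -/
def dualLoopPotential (a1 a2 : ℕ) : MvPolynomial (Fin 2) ℂ :=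
  X 0 * X 1 ^ a1 + X 1 * X 0 ^ a2

/-- The Jacobian ideal of the dual loop potential. -/
def dualLoopJac (a1 a2 : ℕ) : Ideal (MvPolynomial (Fin 2) ℂ) :=
  Ideal.span {pderiv 0 (dualLoopPotential a1 a2), pderiv 1 (dualLoopPotential a1 a2)}

theorem isUnit_natCast_mul_natCast_sub_one {A : Type*} [Ring A] [Algebra ℚ A] {m n : ℕ}
    (h : m * n ≠ 1) : IsUnit ((m : A) * n - 1) := by
  have hc : (m * n - 1 : ℚ) ≠ 0 := by
    rwa [sub_ne_zero, ← Nat.cast_mul, Nat.cast_ne_one]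
  simpa using (isUnit_iff_ne_zero.mpr hc).map (algebraMap ℚ A)

namespace MvPolynomial

variable {R : Type*} [CommSemiring R]

theorem monomial_eq_fin_two (e : Fin 2 →₀ ℕ) (c : R) :
    monomial e c = C c * X 0 ^ e 0 * X 1 ^ e 1 := by
  rw [monomial_eq, Finsupp.prod_fintype _ _ (fun _ => pow_zero _), Fin.prod_univ_two, mul_assoc]

theorem linearMap_eq_zero_of_mem_ideal_span {σ M : Type*} [AddCommMonoid M] [Module R M]
    (L : MvPolynomial σ R →ₗ[R] M) {s : Set (MvPolynomial σ R)}
    (hs : ∀ g ∈ s, ∀ e, L (monomial e 1 * g) = 0) {p : MvPolynomial σ R}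
    (hp : p ∈ Ideal.span s) : L p = 0 := by
  suffices ∀ u, L (u * p) = 0 by simpa using this 1
  induction hp using Submodule.span_induction with
  | mem g hg =>
    intro u
    induction u using MvPolynomial.induction_on' with
    | monomial e c =>
      rw [show monomial e c = c • monomial e (1 : R) by rw [smul_monomial, smul_eq_mul, mul_one],
        smul_mul_assoc, map_smul, hs g hg e, smul_zero]
    | add u v hu hv => rw [add_mul, map_add, hu, hv, add_zero]
  | zero => simp
  | add p q _ _ hp hq => intro u; rw [mul_add, map_add, hp, hq, add_zero]
  | smul v p _ hp => intro u; rw [smul_eq_mul, ← mul_assoc, hp]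

end MvPolynomial

section DualLoop

variable {a1 a2 : ℕ}

variable (a1 a2) in
theorem pderiv_zero_dualLoopPotential :
    pderiv 0 (dualLoopPotential a1 a2) =
      X 1 ^ a1 + (a2 : MvPolynomial (Fin 2) ℂ) * X 0 ^ (a2 - 1) * X 1 := by
  simp [dualLoopPotential]
  ring

variable (a1 a2) in
theorem pderiv_one_dualLoopPotential :
    pderiv 1 (dualLoopPotential a1 a2) =
      (a1 : MvPolynomial (Fin 2) ℂ) * X 0 * X 1 ^ (a1 - 1) + X 0 ^ a2 := by
  simp [dualLoopPotential]
  ring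

theorem X_zero_pow_mul_X_one_mem_dualLoopJac (ha1 : 2 ≤ a1) (ha2 : 2 ≤ a2) :
    X 0 ^ a2 * X 1 ∈ dualLoopJac a1 a2 := by
  rw [← Ideal.unit_mul_mem_iff_mem _
      (isUnit_natCast_mul_natCast_sub_one (by nlinarith : 1 < a1 * a2).ne'),
    dualLoopJac, Ideal.mem_span_pair, pderiv_zero_dualLoopPotential, pderiv_one_dualLoopPotential]
  obtain ⟨m, rfl⟩ := Nat.exists_eq_add_of_le' (Nat.one_le_of_lt ha1)
  obtain ⟨n, rfl⟩ := Nat.exists_eq_add_of_le' (Nat.one_le_of_lt ha2)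
  exact ⟨((m + 1 : ℕ) : MvPolynomial (Fin 2) ℂ) * X 0, -X 1, by simp only [Nat.add_sub_cancel]; ring⟩

theorem X_zero_mul_X_one_pow_mem_dualLoopJac (ha1 : 2 ≤ a1) (ha2 : 2 ≤ a2) :
    X 0 * X 1 ^ a1 ∈ dualLoopJac a1 a2 := by
  rw [← Ideal.unit_mul_mem_iff_mem _
      (isUnit_natCast_mul_natCast_sub_one (by nlinarith : 1 < a1 * a2).ne'),
    dualLoopJac, Ideal.mem_span_pair, pderiv_zero_dualLoopPotential, pderiv_one_dualLoopPotential]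
  obtain ⟨m, rfl⟩ := Nat.exists_eq_add_of_le' (Nat.one_le_of_lt ha1)
  obtain ⟨n, rfl⟩ := Nat.exists_eq_add_of_le' (Nat.one_le_of_lt ha2)
  exact ⟨-X 0, ((n + 1 : ℕ) : MvPolynomial (Fin 2) ℂ) * X 1, by simp only [Nat.add_sub_cancel]; ring⟩

theorem X_zero_pow_mul_X_one_pow_mem_dualLoopJac (ha1 : 2 ≤ a1) (ha2 : 2 ≤ a2) {i j : ℕ}
    (h : a2 ≤ i ∧ 1 ≤ j ∨ 1 ≤ i ∧ a1 ≤ j) : X 0 ^ i * X 1 ^ j ∈ dualLoopJac a1 a2 := by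
  rcases h with ⟨hi, hj⟩ | ⟨hi, hj⟩
  · obtain ⟨i, rfl⟩ := Nat.exists_eq_add_of_le hi
    obtain ⟨j, rfl⟩ := Nat.exists_eq_add_of_le hj
    rw [show (X 0 ^ (a2 + i) * X 1 ^ (1 + j) : MvPolynomial (Fin 2) ℂ) =
        X 0 ^ i * X 1 ^ j * (X 0 ^ a2 * X 1) by ring]
    exact Ideal.mul_mem_left _ _ (X_zero_pow_mul_X_one_mem_dualLoopJac ha1 ha2)
  · obtain ⟨i, rfl⟩ := Nat.exists_eq_add_of_le hi
    obtain ⟨j, rfl⟩ := Nat.exists_eq_add_of_le hj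
    rw [show (X 0 ^ (1 + i) * X 1 ^ (a1 + j) : MvPolynomial (Fin 2) ℂ) =
        X 0 ^ i * X 1 ^ j * (X 0 * X 1 ^ a1) by ring]
    exact Ideal.mul_mem_left _ _ (X_zero_mul_X_one_pow_mem_dualLoopJac ha1 ha2)

theorem mk_dualLoopJac_X_one_pow_add (k : ℕ) :
    Ideal.Quotient.mk (dualLoopJac a1 a2) (X 1 ^ (a1 + k)) =
      -(a2 * Ideal.Quotient.mk (dualLoopJac a1 a2) (X 0 ^ (a2 - 1) * X 1 ^ (k + 1))) := by
  have h : X 1 ^ k * pderiv 0 (dualLoopPotential a1 a2) ∈ dualLoopJac a1 a2 :=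
    Ideal.mul_mem_left _ _ (Ideal.subset_span (by simp))
  rw [← Ideal.Quotient.eq_zero_iff_mem, pderiv_zero_dualLoopPotential] at h
  rw [eq_neg_iff_add_eq_zero, ← h, ← map_natCast (Ideal.Quotient.mk _), ← map_mul, ← map_add]
  ring_nf

theorem mk_dualLoopJac_X_zero_pow_add (k : ℕ) :
    Ideal.Quotient.mk (dualLoopJac a1 a2) (X 0 ^ (a2 + k)) =
      -(a1 * Ideal.Quotient.mk (dualLoopJac a1 a2) (X 0 ^ (k + 1) * X 1 ^ (a1 - 1))) := by
  have h : X 0 ^ k * pderiv 1 (dualLoopPotential a1 a2) ∈ dualLoopJac a1 a2 :=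
    Ideal.mul_mem_left _ _ (Ideal.subset_span (by simp))
  rw [← Ideal.Quotient.eq_zero_iff_mem, pderiv_one_dualLoopPotential] at h
  rw [eq_neg_iff_add_eq_zero, ← h, ← map_natCast (Ideal.Quotient.mk _), ← map_mul, ← map_add]
  ring_nf

/-- Coordinates of `X₀^i X₁^j` modulo the Jacobian ideal in the box monomials: for `j ≥ a1`,
`X₁^j ≡ -a2 X₀^(a2-1) X₁^(j-a1+1)`; for `i ≥ a2`, `X₀^i ≡ -a1 X₀^(i-a2+1) X₁^(a1-1)`; every
other monomial outside the box lies in the ideal. -/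
def dualLoopMonomialCoords (a1 a2 i j : ℕ) : Fin a2 × Fin a1 → ℂ := fun b =>
  if (b.1 : ℕ) = i ∧ (b.2 : ℕ) = j then 1
  else if i = 0 ∧ a1 ≤ j ∧ (b.1 : ℕ) + 1 = a2 ∧ (b.2 : ℕ) + a1 = j + 1 then -a2
  else if j = 0 ∧ a2 ≤ i ∧ (b.2 : ℕ) + 1 = a1 ∧ (b.1 : ℕ) + a2 = i + 1 then -a1
  else 0

theorem dualLoopMonomialCoords_eq_single (b : Fin a2 × Fin a1) :
    dualLoopMonomialCoords a1 a2 b.1 b.2 = Pi.single b 1 := by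
  funext b'
  simp only [dualLoopMonomialCoords, Pi.single_apply, Prod.ext_iff, Fin.ext_iff]
  split_ifs <;> first | rfl | omega

def dualLoopCoords (a1 a2 : ℕ) : MvPolynomial (Fin 2) ℂ →ₗ[ℂ] Fin a2 × Fin a1 → ℂ :=
  (basisMonomials (Fin 2) ℂ).constr ℂ fun e => dualLoopMonomialCoords a1 a2 (e 0) (e 1)

theorem dualLoopCoords_X_pow_mul_X_pow (i j : ℕ) :
    dualLoopCoords a1 a2 (X 0 ^ i * X 1 ^ j) = dualLoopMonomialCoords a1 a2 i j := by
  rw [X_pow_eq_monomial, X_pow_eq_monomial, monomial_mul, mul_one]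
  exact ((basisMonomials (Fin 2) ℂ).constr_basis ℂ _ _).trans (by simp)

theorem dualLoopCoords_eq_zero_of_mem (ha1 : 2 ≤ a1) (ha2 : 2 ≤ a2) {p : MvPolynomial (Fin 2) ℂ}
    (hp : p ∈ dualLoopJac a1 a2) : dualLoopCoords a1 a2 p = 0 := by
  refine linearMap_eq_zero_of_mem_ideal_span _ (fun g hg e => ?_) hp
  rw [monomial_eq_fin_two, C_1, one_mul]
  rcases hg with rfl | rfl
  · rw [pderiv_zero_dualLoopPotential, show X 0 ^ e 0 * X 1 ^ e 1 *
      (X 1 ^ a1 + (a2 : MvPolynomial (Fin 2) ℂ) * X 0 ^ (a2 - 1) * X 1) =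
      X 0 ^ e 0 * X 1 ^ (e 1 + a1) + a2 • (X 0 ^ (e 0 + (a2 - 1)) * X 1 ^ (e 1 + 1)) by ring,
      map_add, map_nsmul, dualLoopCoords_X_pow_mul_X_pow, dualLoopCoords_X_pow_mul_X_pow]
    funext b
    simp only [Pi.add_apply, Pi.smul_apply, Pi.zero_apply]
    simp only [nsmul_eq_mul, dualLoopMonomialCoords]
    split_ifs <;> first | ring1 | omega | simp_all
  · rw [pderiv_one_dualLoopPotential, show X 0 ^ e 0 * X 1 ^ e 1 *
      ((a1 : MvPolynomial (Fin 2) ℂ) * X 0 * X 1 ^ (a1 - 1) + X 0 ^ a2) =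
      a1 • (X 0 ^ (e 0 + 1) * X 1 ^ (e 1 + (a1 - 1))) + X 0 ^ (e 0 + a2) * X 1 ^ e 1 by ring,
      map_add, map_nsmul, dualLoopCoords_X_pow_mul_X_pow, dualLoopCoords_X_pow_mul_X_pow]
    funext b
    simp only [Pi.add_apply, Pi.smul_apply, Pi.zero_apply]
    simp only [nsmul_eq_mul, dualLoopMonomialCoords]
    split_ifs <;> first | ring1 | omega | simp_all

def dualLoopMilnorMonomial (a1 a2 : ℕ) (b : Fin a2 × Fin a1) :
    MvPolynomial (Fin 2) ℂ ⧸ dualLoopJac a1 a2 :=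
  Ideal.Quotient.mk _ (X 0 ^ (b.1 : ℕ) * X 1 ^ (b.2 : ℕ))

theorem linearIndependent_dualLoopMilnorMonomial (ha1 : 2 ≤ a1) (ha2 : 2 ≤ a2) :
    LinearIndependent ℂ (dualLoopMilnorMonomial a1 a2) := by
  let coords := ((dualLoopJac a1 a2).restrictScalars ℂ).liftQ (dualLoopCoords a1 a2)
    (fun _ hp => dualLoopCoords_eq_zero_of_mem ha1 ha2 hp) ∘ₗ
    (Submodule.Quotient.restrictScalarsEquiv ℂ (dualLoopJac a1 a2)).symm.toLinearMap
  have hcoords : coords ∘ dualLoopMilnorMonomial a1 a2 = Pi.basisFun ℂ (Fin a2 × Fin a1) := by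
    ext b : 1
    rw [Pi.basisFun_apply, ← dualLoopMonomialCoords_eq_single, ← dualLoopCoords_X_pow_mul_X_pow]
    rfl
  exact LinearIndependent.of_comp coords (hcoords ▸ (Pi.basisFun ℂ _).linearIndependent)

theorem mk_X_pow_mul_X_pow_mem_span_dualLoopMilnorMonomial (ha1 : 2 ≤ a1) (ha2 : 2 ≤ a2)
    (i j : ℕ) : Ideal.Quotient.mk (dualLoopJac a1 a2) (X 0 ^ i * X 1 ^ j) ∈
      Submodule.span ℂ (Set.range (dualLoopMilnorMonomial a1 a2)) := by
  have of_pos : ∀ i j, 1 ≤ i → 1 ≤ j → Ideal.Quotient.mk (dualLoopJac a1 a2) (X 0 ^ i * X 1 ^ j) ∈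
      Submodule.span ℂ (Set.range (dualLoopMilnorMonomial a1 a2)) := by
    intro i j hi hj
    by_cases hbox : i < a2 ∧ j < a1
    · exact Submodule.subset_span ⟨(⟨i, hbox.1⟩, ⟨j, hbox.2⟩), rfl⟩
    · rw [Ideal.Quotient.eq_zero_iff_mem.mpr
        (X_zero_pow_mul_X_one_pow_mem_dualLoopJac ha1 ha2 (by omega))]
      exact zero_mem _
  by_cases hbox : i < a2 ∧ j < a1
  · exact Submodule.subset_span ⟨(⟨i, hbox.1⟩, ⟨j, hbox.2⟩), rfl⟩
  rcases Nat.eq_zero_or_pos i with rfl | hi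
  · obtain ⟨k, rfl⟩ := Nat.exists_eq_add_of_le (show a1 ≤ j by omega)
    rw [pow_zero, one_mul, mk_dualLoopJac_X_one_pow_add, ← nsmul_eq_mul]
    exact neg_mem (nsmul_mem (of_pos _ _ (by omega) (by omega)) _)
  rcases Nat.eq_zero_or_pos j with rfl | hj
  · obtain ⟨k, rfl⟩ := Nat.exists_eq_add_of_le (show a2 ≤ i by omega)
    rw [pow_zero, mul_one, mk_dualLoopJac_X_zero_pow_add, ← nsmul_eq_mul]
    exact neg_mem (nsmul_mem (of_pos _ _ (by omega) (by omega)) _)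
  exact of_pos i j hi hj

theorem span_dualLoopMilnorMonomial (ha1 : 2 ≤ a1) (ha2 : 2 ≤ a2) :
    Submodule.span ℂ (Set.range (dualLoopMilnorMonomial a1 a2)) = ⊤ := by
  rw [eq_top_iff]
  rintro q -
  obtain ⟨p, rfl⟩ := Ideal.Quotient.mk_surjective q
  induction p using MvPolynomial.induction_on' with
  | monomial e c =>
    rw [monomial_eq_fin_two, mul_assoc, ← smul_eq_C_mul, ← Ideal.Quotient.mkₐ_eq_mk ℂ, map_smul]
    exact Submodule.smul_mem _ c
      (mk_X_pow_mul_X_pow_mem_span_dualLoopMilnorMonomial ha1 ha2 (e 0) (e 1))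
  | add p q hp hq => rw [map_add]; exact add_mem hp hq

end DualLoop

/-- The images of the monomials `X̄1^b1 * X̄2^b2` with `0 ≤ b1 < a2`,
`0 ≤ b2 < a1` form a `ℂ`-basis of the Milnor ring `Q_{W^T}`; in particular
`dim_ℂ Q_{W^T} = a1 * a2`. -/
theorem dualLoopMilnor_monomial_basis (a1 a2 : ℕ) (ha1 : 2 ≤ a1) (ha2 : 2 ≤ a2) :
    LinearIndependent ℂ
      (fun b : Fin a2 × Fin a1 =>
        Ideal.Quotient.mk (dualLoopJac a1 a2) (X 0 ^ (b.1 : ℕ) * X 1 ^ (b.2 : ℕ))) ∧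
    Submodule.span ℂ
      (Set.range (fun b : Fin a2 × Fin a1 =>
        Ideal.Quotient.mk (dualLoopJac a1 a2) (X 0 ^ (b.1 : ℕ) * X 1 ^ (b.2 : ℕ)))) = ⊤ ∧
    Module.finrank ℂ (MvPolynomial (Fin 2) ℂ ⧸ dualLoopJac a1 a2) = a1 * a2 := by
  have hli := linearIndependent_dualLoopMilnorMonomial ha1 ha2
  have hspan := span_dualLoopMilnorMonomial ha1 ha2
  refine ⟨hli, hspan, ?_⟩
  rw [Module.finrank_eq_card_basis (Module.Basis.mk hli hspan.ge), Fintype.card_prod,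
    Fintype.card_fin, Fintype.card_fin, mul_comm]

end
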